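/- arXiv:1406.4151 — 2 statements merged into one kernel-verified Lean document; each statement's English description precedes it below -/
import Mathlib

section
/- Let X₁, X₂, ... be a stationary, ergodic real-valued time series with finite mean μ = E[X₁], and let X̄_n = n⁻¹ Σ_{i=1}^n X_i. Then, almost surely as n → ∞, the proportion of indices i ≤ n with X_i strictly between min(X̄_n, μ) and max(X̄_n, μ) converges to 0. -/
/-!
Write `Sₙf = ∑_{i<n} f ∘ Tⁱ`. If `c > ∫ f`, the set where `Sₙf - nc` is unbounded above
is `T`-invariant, so by ergodicity it is null or conull. It cannot be conull: then almost
every point starts a block of length `≥ 1` on which `f - c` has nonnegative sum, and the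
Keane–Petersen covering argument turns this into `∫ (f - c) ≥ 0`. Hence
`limsup Sₙf / n ≤ ∫ f` a.s., and applying this to `-f` gives Birkhoff's theorem
`Sₙf / n → ∫ f` a.s.

For the theorem, once `|X̄ₙ - μ| < δ`, every `Xᵢ` strictly between `X̄ₙ` and `μ` lies in
`0 < |x - μ| < δ`. By Birkhoff's theorem applied to the indicator of this event, the proportion
of such indices tends to its probability, which tends to `0` as `δ → 0`.
-/

open MeasureTheory Filter Topology Set

section BirkhoffSum

variable {α : Type*} {T : α → α}

theorem birkhoffSum_le_birkhoffSum_abs (g : α → ℝ) (n : ℕ) (x : α) :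
    birkhoffSum T g n x ≤ birkhoffSum T (fun y => |g y|) n x :=
  Finset.sum_le_sum fun _ _ => le_abs_self _

theorem monotone_birkhoffSum_abs (g : α → ℝ) (x : α) :
    Monotone fun n => birkhoffSum T (fun y => |g y|) n x := by
  intro m n hmn
  obtain ⟨k, rfl⟩ := Nat.exists_eq_add_of_le hmn
  simp only [birkhoffSum_add]
  exact le_add_of_nonneg_right (Finset.sum_nonneg fun _ _ => abs_nonneg _)

/-- Keane–Petersen: chop `[0, M)` greedily into blocks of length at most `N` with nonnegative
sums; only the last block can overshoot `M`, by fewer than `N` steps. -/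
theorem neg_birkhoffSum_abs_le_birkhoffSum {g : α → ℝ} {N : ℕ}
    (h : ∀ y, ∃ n ∈ Finset.Icc 1 N, 0 ≤ birkhoffSum T g n y) (M : ℕ) (x : α) :
    -birkhoffSum T (fun y => |g y|) N (T^[M] x) ≤ birkhoffSum T g M x := by
  induction M using Nat.strong_induction_on generalizing x with
  | _ M ih =>
    obtain ⟨n, hn, hsum⟩ := h x
    rw [Finset.mem_Icc] at hn
    rcases le_or_gt n M with hnM | hMn
    · obtain ⟨k, rfl⟩ := Nat.exists_eq_add_of_le hnM
      have := ih k (by omega) (T^[n] x)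
      rw [← Function.iterate_add_apply, add_comm k n] at this
      rw [birkhoffSum_add]
      linarith
    · obtain ⟨k, rfl⟩ := Nat.exists_eq_add_of_le hMn.le
      rw [birkhoffSum_add] at hsum
      have h₁ := birkhoffSum_le_birkhoffSum_abs (T := T) g k (T^[M] x)
      have h₂ : birkhoffSum T (fun y => |g y|) k (T^[M] x) ≤ _ :=
        monotone_birkhoffSum_abs g (T^[M] x) (show k ≤ N by omega)
      linarith

theorem birkhoffSum_indicator_one (s : Set α) [DecidablePred (· ∈ s)] (n : ℕ) (x : α) :
    birkhoffSum T (s.indicator fun _ => 1) n x =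
      (((Finset.range n).filter fun i => T^[i] x ∈ s).card : ℝ) := by
  simp [birkhoffSum, Set.indicator_apply, Finset.sum_boole]

theorem birkhoffSum_sub_const (f : α → ℝ) (c : ℝ) (n : ℕ) (x : α) :
    birkhoffSum T (fun y => f y - c) n x = birkhoffSum T f n x - n * c := by
  simp [birkhoffSum, Finset.sum_sub_distrib]

theorem preimage_setOf_bddAbove_birkhoffSum_sub (f : α → ℝ) (c : ℝ) :
    T ⁻¹' {x | BddAbove (range fun n : ℕ => birkhoffSum T f n x - n * c)} =
      {x | BddAbove (range fun n : ℕ => birkhoffSum T f n x - n * c)} := by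
  ext x
  have hsucc (n : ℕ) : birkhoffSum T f (n + 1) x - (n + 1 : ℕ) * c =
      (f x - c) + (birkhoffSum T f n (T x) - n * c) := by
    rw [birkhoffSum_succ']; push_cast; ring
  simp only [mem_preimage, mem_ofPred_eq, bddAbove_def, forall_mem_range]
  constructor
  · rintro ⟨B, hB⟩
    refine ⟨max 0 (f x - c + B), fun n => ?_⟩
    cases n with
    | zero => simp
    | succ n => rw [hsucc]; exact le_max_of_le_right (by linarith [hB n])
  · rintro ⟨B, hB⟩
    exact ⟨B - (f x - c), fun n => by linarith [hsucc n, hB (n + 1)]⟩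

end BirkhoffSum

theorem eventually_inv_mul_lt_of_bddAbove {u : ℕ → ℝ} {a b : ℝ} (hab : a < b)
    (h : BddAbove (range fun n : ℕ => u n - n * a)) :
    ∀ᶠ n : ℕ in atTop, (n : ℝ)⁻¹ * u n < b := by
  obtain ⟨B, hB⟩ := h
  rw [mem_upperBounds, forall_mem_range] at hB
  filter_upwards [(tendsto_const_div_atTop_nhds_zero_nat B).eventually
    (gt_mem_nhds (sub_pos.2 hab)), eventually_gt_atTop 0] with n hn hn₀
  have hn₀ : (0 : ℝ) < n := Nat.cast_pos.2 hn₀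
  calc (n : ℝ)⁻¹ * u n ≤ (n : ℝ)⁻¹ * (B + n * a) :=
        mul_le_mul_of_nonneg_left (by linarith [hB n]) (inv_nonneg.2 hn₀.le)
    _ = B / n + a := by field_simp
    _ < b := by linarith

theorem tendsto_of_forall_rat_eventually {ι : Type*} {l : Filter ι} {u : ι → ℝ} {a : ℝ}
    (hlt : ∀ q : ℚ, a < q → ∀ᶠ i in l, u i < q)
    (hgt : ∀ q : ℚ, (q : ℝ) < a → ∀ᶠ i in l, q < u i) :
    Tendsto u l (𝓝 a) := by
  refine tendsto_order.2 ⟨fun b hb => ?_, fun b hb => ?_⟩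
  · obtain ⟨q, hbq, hqa⟩ := exists_rat_btwn hb
    exact (hgt q hqa).mono fun i hi => hbq.trans hi
  · obtain ⟨q, haq, hqb⟩ := exists_rat_btwn hb
    exact (hlt q haq).mono fun i hi => hi.trans hqb

theorem tendsto_zero_of_forall_eventually_le {ι κ : Type*} {l : Filter ι} {l' : Filter κ}
    [l'.NeBot] {u : ι → ℝ} {v : κ → ι → ℝ} {b : κ → ℝ} (hu : ∀ i, 0 ≤ u i)
    (hv : ∀ k, Tendsto (v k) l (𝓝 (b k))) (hb : Tendsto b l' (𝓝 0))
    (huv : ∀ k, ∀ᶠ i in l, u i ≤ v k i) : Tendsto u l (𝓝 0) := by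
  refine tendsto_order.2 ⟨fun a ha => .of_forall fun i => ha.trans_le (hu i), fun a ha => ?_⟩
  obtain ⟨k, hk⟩ := (hb.eventually (gt_mem_nhds ha)).exists
  filter_upwards [(hv k).eventually (gt_mem_nhds hk), huv k] with i hv hu
  exact hu.trans_lt hv

theorem nonneg_of_forall_nat_mul_add_nonneg {a C : ℝ} (h : ∀ M : ℕ, 0 ≤ M * a + C) :
    0 ≤ a := by
  by_contra! ha
  obtain ⟨M, hM⟩ := exists_nat_gt (C / -a)
  have := (div_lt_iff₀ (neg_pos.2 ha)).1 hM
  linarith [h M]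

theorem Measurable.birkhoffSum {α : Type*} [MeasurableSpace α] {T : α → α} {g : α → ℝ}
    (hT : Measurable T) (hg : Measurable g) (n : ℕ) : Measurable (birkhoffSum T g n) :=
  Finset.measurable_sum _ fun i _ => hg.comp (hT.iterate i)

namespace MeasureTheory.MeasurePreserving

variable {α : Type*} [MeasurableSpace α] {P : Measure α} {T : α → α}

theorem integral_comp_of_aestronglyMeasurable (hT : MeasurePreserving T P P) {g : α → ℝ}
    (hg : AEStronglyMeasurable g P) : ∫ x, g (T x) ∂P = ∫ x, g x ∂P := by
  conv_rhs => rw [← hT.map_eq]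
  exact (integral_map hT.measurable.aemeasurable (by rwa [hT.map_eq])).symm

theorem integrable_birkhoffSum (hT : MeasurePreserving T P P) {g : α → ℝ} (hg : Integrable g P)
    (n : ℕ) : Integrable (birkhoffSum T g n) P :=
  integrable_finsetSum _ fun i _ => (hT.iterate i).integrable_comp_of_integrable hg

theorem integral_birkhoffSum (hT : MeasurePreserving T P P) {g : α → ℝ} (hg : Integrable g P)
    (n : ℕ) : ∫ x, birkhoffSum T g n x ∂P = n * ∫ x, g x ∂P := by
  simp only [birkhoffSum]
  rw [integral_finsetSum (f := fun i x => g (T^[i] x)) _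
    fun i _ => (hT.iterate i).integrable_comp_of_integrable hg]
  simp [(hT.iterate _).integral_comp_of_aestronglyMeasurable hg.1]

theorem integral_nonneg_of_forall_exists_birkhoffSum_nonneg (hT : MeasurePreserving T P P)
    {g : α → ℝ} (hg : Integrable g P) {N : ℕ}
    (h : ∀ y, ∃ n ∈ Finset.Icc 1 N, 0 ≤ birkhoffSum T g n y) : 0 ≤ ∫ x, g x ∂P := by
  refine nonneg_of_forall_nat_mul_add_nonneg (C := N * ∫ x, |g x| ∂P) fun M => ?_
  have hshift : Integrable (fun x => birkhoffSum T (fun y => |g y|) N (T^[M] x)) P :=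
    (hT.iterate M).integrable_comp_of_integrable (hT.integrable_birkhoffSum hg.abs N)
  have := integral_mono (f := fun x => -birkhoffSum T (fun y => |g y|) N (T^[M] x))
    hshift.neg (hT.integrable_birkhoffSum hg M) (neg_birkhoffSum_abs_le_birkhoffSum h M)
  rw [integral_neg, (hT.iterate M).integral_comp_of_aestronglyMeasurable
    (hT.integrable_birkhoffSum hg.abs N).1, hT.integral_birkhoffSum hg,
    hT.integral_birkhoffSum hg.abs] at this
  linarith

theorem integral_nonneg_of_ae_exists_birkhoffSum_nonneg (hT : MeasurePreserving T P P)
    {g : α → ℝ} (hgm : Measurable g) (hg : Integrable g P)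
    (h : ∀ᵐ y ∂P, ∃ n, 1 ≤ n ∧ 0 ≤ birkhoffSum T g n y) : 0 ≤ ∫ x, g x ∂P := by
  set F : ℕ → Set α := fun N => {y | ∃ n ∈ Finset.Icc 1 N, 0 ≤ birkhoffSum T g n y}
  have hFm (N : ℕ) : MeasurableSet (F N) := by
    simp only [F, ofPred_exists, ofPred_and]
    exact .iUnion fun n => (MeasurableSet.const _).inter
      (measurableSet_le measurable_const (hT.measurable.birkhoffSum hgm n))
  have hF_anti : Antitone fun N => (F N)ᶜ := fun N N' hNN' => compl_subset_compl.2
    fun y ⟨n, hn, hy⟩ => ⟨n, Finset.Icc_subset_Icc le_rfl hNN' hn, hy⟩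
  have hF_null : P (⋂ N, (F N)ᶜ) = 0 := by
    rw [← compl_iUnion, measure_eq_zero_iff_ae_notMem]
    filter_upwards [h] with y ⟨n, hn, hy⟩
    exact not_notMem.2 <| mem_iUnion.2 ⟨n, n, Finset.mem_Icc.2 ⟨hn, le_rfl⟩, hy⟩
  have htail : Tendsto (fun N => ∫ x in (F N)ᶜ, |g x| ∂P) atTop (𝓝 0) := by
    have := tendsto_setIntegral_of_antitone (fun N => (hFm N).compl) hF_anti
      ⟨0, hg.abs.integrableOn⟩
    rwa [setIntegral_measure_zero _ hF_null] at this
  refine ge_of_tendsto (by simpa using tendsto_const_nhds.add htail)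
    (eventually_atTop.2 ⟨1, fun N hN => ?_⟩)
  -- Adding `|g|` off `F N` makes the covering hypothesis hold everywhere (with `n = 1`),
  -- at the cost of `∫ x in (F N)ᶜ, |g x| ∂P`, which tends to `0`.
  set g' : α → ℝ := fun x => g x + (F N)ᶜ.indicator (fun y => |g y|) x
  have hg'i : Integrable g' P := hg.add (hg.abs.indicator (hFm N).compl)
  have hg' : ∀ y, ∃ n ∈ Finset.Icc 1 N, 0 ≤ birkhoffSum T g' n y := by
    intro y
    by_cases hy : y ∈ F N
    · obtain ⟨n, hn, hy⟩ := hy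
      refine ⟨n, hn, hy.trans (Finset.sum_le_sum fun i _ => ?_)⟩
      exact le_add_of_nonneg_right (indicator_nonneg (fun _ _ => abs_nonneg _) _)
    · refine ⟨1, Finset.mem_Icc.2 ⟨le_rfl, hN⟩, ?_⟩
      simp only [birkhoffSum_one, g', indicator_of_mem (mem_compl hy)]
      linarith [neg_abs_le (g y)]
  have := hT.integral_nonneg_of_forall_exists_birkhoffSum_nonneg hg'i hg'
  rwa [integral_add hg (hg.abs.indicator (hFm N).compl), integral_indicator (hFm N).compl]
    at this

end MeasureTheory.MeasurePreserving

namespace Ergodic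

variable {α : Type*} [MeasurableSpace α] {P : Measure α} [IsProbabilityMeasure P] {T : α → α}

theorem ae_bddAbove_birkhoffSum_sub_mul (hT : Ergodic T P) {f : α → ℝ} (hfm : Measurable f)
    (hf : Integrable f P) {c : ℝ} (hc : ∫ x, f x ∂P < c) :
    ∀ᵐ x ∂P, BddAbove (range fun n : ℕ => birkhoffSum T f n x - n * c) := by
  set E := {x | BddAbove (range fun n : ℕ => birkhoffSum T f n x - n * c)}
  have hEm : MeasurableSet E := by
    have : E = ⋃ B : ℕ, ⋂ n : ℕ, {x | birkhoffSum T f n x - n * c ≤ B} := by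
      ext x
      simp only [E, mem_ofPred_eq, bddAbove_def, forall_mem_range, mem_iUnion, mem_iInter]
      exact ⟨fun ⟨B, hB⟩ => (exists_nat_ge B).imp fun N hN n => (hB n).trans hN,
        fun ⟨N, hN⟩ => ⟨N, hN⟩⟩
    rw [this]
    exact .iUnion fun B => .iInter fun n =>
      measurableSet_le ((hT.measurable.birkhoffSum hfm n).sub_const _) measurable_const
  refine (hT.ae_mem_or_ae_notMem hEm (preimage_setOf_bddAbove_birkhoffSum_sub f c)).resolve_right
    fun hE => ?_
  have := hT.toMeasurePreserving.integral_nonneg_of_ae_exists_birkhoffSum_nonneg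
    (g := fun x => f x - c) (hfm.sub measurable_const) (hf.sub (integrable_const c)) ?_
  · rw [integral_sub hf (integrable_const c), integral_const, probReal_univ, one_smul] at this
    linarith
  filter_upwards [hE] with x hx
  obtain ⟨_, ⟨n, rfl⟩, hn⟩ := not_bddAbove_iff.1 hx 0
  refine ⟨n, Nat.one_le_iff_ne_zero.2 ?_, (birkhoffSum_sub_const f c n x).symm ▸ hn.le⟩
  rintro rfl
  simp at hn

theorem ae_eventually_birkhoffAverage_lt (hT : Ergodic T P) {f : α → ℝ} (hfm : Measurable f)
    (hf : Integrable f P) {c : ℝ} (hc : ∫ x, f x ∂P < c) :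
    ∀ᵐ x ∂P, ∀ᶠ n in atTop, birkhoffAverage ℝ T f n x < c := by
  obtain ⟨c', hfc', hc'c⟩ := exists_between hc
  filter_upwards [hT.ae_bddAbove_birkhoffSum_sub_mul hfm hf hfc'] with x hx
  exact eventually_inv_mul_lt_of_bddAbove hc'c hx

theorem ae_tendsto_birkhoffAverage_of_measurable (hT : Ergodic T P) {f : α → ℝ}
    (hfm : Measurable f) (hf : Integrable f P) :
    ∀ᵐ x ∂P, Tendsto (birkhoffAverage ℝ T f · x) atTop (𝓝 (∫ x, f x ∂P)) := by
  have hlt : ∀ᵐ x ∂P, ∀ q : ℚ, ∫ x, f x ∂P < q →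
      ∀ᶠ n in atTop, birkhoffAverage ℝ T f n x < q :=
    ae_all_iff.2 fun q =>
      eventually_imp_distrib_left.2 (hT.ae_eventually_birkhoffAverage_lt hfm hf)
  have hgt : ∀ᵐ x ∂P, ∀ q : ℚ, q < ∫ x, f x ∂P →
      ∀ᶠ n in atTop, q < birkhoffAverage ℝ T f n x := by
    refine ae_all_iff.2 fun q => eventually_imp_distrib_left.2 fun hq => ?_
    have := hT.ae_eventually_birkhoffAverage_lt hfm.neg hf.neg (c := -q)
      (by rw [integral_neg']; linarith)
    simpa [birkhoffAverage_neg] using this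
  filter_upwards [hlt, hgt] with x hxlt hxgt
  exact tendsto_of_forall_rat_eventually hxlt hxgt

theorem ae_tendsto_birkhoffAverage (hT : Ergodic T P) {f : α → ℝ} (hf : Integrable f P) :
    ∀ᵐ x ∂P, Tendsto (birkhoffAverage ℝ T f · x) atTop (𝓝 (∫ x, f x ∂P)) := by
  have hff' := hf.1.ae_eq_mk
  filter_upwards [hT.ae_tendsto_birkhoffAverage_of_measurable
      hf.1.stronglyMeasurable_mk.measurable (hf.congr hff'),
    ae_all_iff.2 (hT.quasiMeasurePreserving.birkhoffAverage_ae_eq_of_ae_eq ℝ hff')]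
    with x hx hxf
  rw [integral_congr_ae hff']
  exact hx.congr fun n => (hxf n).symm

end Ergodic

theorem mem_ball_diff_singleton_of_min_lt_of_lt_max {a b m δ : ℝ}
    (h : min b m < a ∧ a < max b m) (hb : dist b m < δ) : a ∈ Metric.ball m δ \ {m} := by
  obtain ⟨hmin, hmax⟩ := h
  rw [Real.dist_eq, abs_lt] at hb
  have hδ : 0 < δ := by linarith
  refine ⟨?_, fun ham => ?_⟩
  · rw [Metric.mem_ball, Real.dist_eq, abs_lt]
    constructor
    · linarith [le_min (show m - δ ≤ b by linarith) (show m - δ ≤ m by linarith)]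
    · linarith [max_le (show b ≤ m + δ by linarith) (show m ≤ m + δ by linarith)]
  · rw [mem_singleton_iff] at ham
    subst ham
    rcases min_lt_iff.1 hmin with h | h <;> rcases lt_max_iff.1 hmax with h' | h' <;> linarith

theorem tendsto_measureReal_preimage_ball_diff_singleton {Ω : Type*} [MeasurableSpace Ω]
    {P : Measure Ω} [IsFiniteMeasure P] {X : Ω → ℝ} (hX : AEMeasurable X P) (m : ℝ) :
    Tendsto (fun k : ℕ => P.real (X ⁻¹' (Metric.ball m (1 / (k + 1)) \ {m}))) atTop
      (𝓝 0) := by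
  have hempty : ⋂ k : ℕ, X ⁻¹' (Metric.ball m (1 / (k + 1)) \ {m}) = ∅ := by
    refine eq_empty_of_forall_notMem fun ω hω => ?_
    simp only [mem_iInter, mem_preimage, Set.mem_sdiff, Metric.mem_ball, mem_singleton_iff]
      at hω
    obtain ⟨k, hk⟩ := exists_nat_one_div_lt (dist_pos.2 (hω 0).2)
    exact (hω k).1.not_gt hk
  have hanti : Antitone fun k : ℕ => X ⁻¹' (Metric.ball m (1 / (k + 1)) \ {m}) :=
    fun k k' hkk' => preimage_mono <| sdiff_subset_sdiff_left <| Metric.ball_subset_ball <|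
      one_div_le_one_div_of_le (by positivity) (by exact_mod_cast Nat.succ_le_succ hkk')
  have := tendsto_measure_iInter_atTop
    (fun k => hX.nullMeasurable (measurableSet_ball.diff (measurableSet_singleton m))) hanti
    ⟨0, measure_ne_top _ _⟩
  rw [hempty, measure_empty] at this
  exact (ENNReal.tendsto_toReal ENNReal.zero_ne_top).comp this

/-- For a stationary ergodic integrable time series `Xᵢ = X ∘ T^[i]`
(with `T` an ergodic measure-preserving shift) with mean `μ`, the proportion of
indices `i ≤ n` with `Xᵢ` strictly between `min(X̄ₙ, μ)` and `max(X̄ₙ, μ)` tends to `0`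
almost surely. -/
theorem stmt_4 {Ω : Type*} [MeasurableSpace Ω] (P : Measure Ω) [IsProbabilityMeasure P]
    (T : Ω → Ω) (hT : Ergodic T P)
    (X : Ω → ℝ) (hX : Integrable X P) (μ : ℝ) (hμ : μ = ∫ ω, X ω ∂P)
    (Xbar : ℕ → Ω → ℝ)
    (hXbar : ∀ n ω, Xbar n ω = (n : ℝ)⁻¹ * ∑ i ∈ Finset.range n, X (T^[i] ω)) :
    ∀ᵐ ω ∂P, Tendsto
      (fun n : ℕ =>
        ((Finset.range n).filter (fun i =>
            min (Xbar n ω) μ < X (T^[i] ω) ∧ X (T^[i] ω) < max (Xbar n ω) μ)).card / (n : ℝ))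
      atTop (nhds 0) := by
  classical
  set A : ℕ → Set Ω := fun k => X ⁻¹' (Metric.ball μ (1 / (k + 1)) \ {μ})
  have hA (k : ℕ) : NullMeasurableSet (A k) P :=
    hX.1.aemeasurable.nullMeasurable (measurableSet_ball.diff (measurableSet_singleton μ))
  have hfreq (k : ℕ) : ∀ᵐ ω ∂P,
      Tendsto (birkhoffAverage ℝ T ((A k).indicator fun _ => 1) · ω) atTop
        (𝓝 (P.real (A k))) := by
    simpa [integral_indicator₀ (hA k)] using
      hT.ae_tendsto_birkhoffAverage ((integrable_const (1 : ℝ)).indicator₀ (hA k))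
  filter_upwards [hT.ae_tendsto_birkhoffAverage hX, ae_all_iff.2 hfreq] with ω hmean hfreq
  refine tendsto_zero_of_forall_eventually_le (fun n => by positivity) hfreq
    (tendsto_measureReal_preimage_ball_diff_singleton hX.1.aemeasurable μ) fun k => ?_
  rw [← hμ] at hmean
  filter_upwards [hmean (Metric.ball_mem_nhds μ (by positivity : (0 : ℝ) < 1 / (k + 1)))]
    with n hn
  rw [birkhoffAverage, birkhoffSum_indicator_one, smul_eq_mul, div_eq_inv_mul, hXbar]
  gcongr with i
  exact fun hi => mem_ball_diff_singleton_of_min_lt_of_lt_max hi hn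
end

section
/- Let X be a real random variable with mean μ satisfying P[X > x ] = p x^{-α} L(x) and P[X < -x] = (1-p) x^{-α} L(x) for all x > 0, where α ∈ (1,2), p ∈ [0,1], and L is slowly varying at infinity. Set b = P[X < μ] - P[X > μ] and ξ = |X - μ|(1 + b·sign(X - μ)). Then, as x → ∞, P[ξ > x] = ((1+b)^α p + (1-b)^α (1-p) + o(1)) x^{-α} L(x). -/
open MeasureTheory Filter

private lemma ratio_lemma (α q : ℝ) (L : ℝ → ℝ) (hLpos : ∀ x > 0, 0 < L x)
    (hL : ∀ y > 0, Tendsto (fun x => L (x * y) / L x) atTop (nhds 1))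
    (T : ℝ → ℝ) (hT : ∀ t > 0, T t = q * t ^ (-α) * L t)
    (y : ℝ) (hy : 0 < y) :
    Tendsto (fun x => T (x * y) / (x ^ (-α) * L x)) atTop
      (nhds (q * y ^ (-α))) := by
  have h := (hL y hy).const_mul (q * y ^ (-α))
  rw [mul_one] at h
  refine h.congr' ?_
  filter_upwards [eventually_gt_atTop 0] with x hx
  have hxy : 0 < x * y := mul_pos hx hy
  have hLx := hLpos x hx
  have hxa : (0:ℝ) < x ^ (-α) := Real.rpow_pos_of_pos hx _
  rw [hT _ hxy, Real.mul_rpow hx.le hy.le]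
  field_simp

private lemma shift_lemma (α q : ℝ) (L : ℝ → ℝ) (hLpos : ∀ x > 0, 0 < L x)
    (hL : ∀ y > 0, Tendsto (fun x => L (x * y) / L x) atTop (nhds 1))
    (T : ℝ → ℝ) (hanti : Antitone T) (hT : ∀ t > 0, T t = q * t ^ (-α) * L t)
    (c m : ℝ) (hc : 0 < c) :
    Tendsto (fun x => T (m + x / c) / (x ^ (-α) * L x)) atTop
      (nhds (q * c ^ α)) := by
  have hval : (c⁻¹:ℝ) ^ (-α) = c ^ α := by
    rw [Real.inv_rpow hc.le, Real.rpow_neg hc.le, inv_inv]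
  rw [Metric.tendsto_nhds]
  intro δ hδ
  -- choose ε ∈ (0,1) with q*((1-ε)/c)^(-α) < q c^α + δ and q c^α - δ < q*((1+ε)/c)^(-α)
  have hcont1 : Tendsto (fun e : ℝ => q * ((1-e)/c) ^ (-α)) (nhds 0)
      (nhds (q * c ^ α)) := by
    have h1 : ContinuousAt (fun e : ℝ => (1-e)/c) 0 := by fun_prop
    have h2 : ContinuousAt (fun e : ℝ => q * ((1-e)/c) ^ (-α)) 0 := by
      refine (h1.rpow_const ?_).const_mul q
      left
      simp [hc.ne']
    have h3 := h2.tendsto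
    simpa [hval] using h3
  have hcont2 : Tendsto (fun e : ℝ => q * ((1+e)/c) ^ (-α)) (nhds 0)
      (nhds (q * c ^ α)) := by
    have h1 : ContinuousAt (fun e : ℝ => (1+e)/c) 0 := by fun_prop
    have h2 : ContinuousAt (fun e : ℝ => q * ((1+e)/c) ^ (-α)) 0 := by
      refine (h1.rpow_const ?_).const_mul q
      left
      simp [hc.ne']
    have h3 := h2.tendsto
    simpa [hval] using h3
  have hev1 : ∀ᶠ e in nhdsWithin (0:ℝ) (Set.Ioi 0),
      q * ((1-e)/c) ^ (-α) < q * c ^ α + δ :=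
    ((hcont1.mono_left nhdsWithin_le_nhds).eventually_lt_const (by linarith))
  have hev2 : ∀ᶠ e in nhdsWithin (0:ℝ) (Set.Ioi 0),
      q * c ^ α - δ < q * ((1+e)/c) ^ (-α) :=
    ((hcont2.mono_left nhdsWithin_le_nhds).eventually_const_lt (by linarith))
  have hev3 : ∀ᶠ e in nhdsWithin (0:ℝ) (Set.Ioi 0), e < 1 :=
    eventually_nhdsWithin_of_eventually_nhds (eventually_lt_nhds (by norm_num))
  have hev0 : ∀ᶠ e in nhdsWithin (0:ℝ) (Set.Ioi 0), (0:ℝ) < e :=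
    eventually_mem_nhdsWithin
  obtain ⟨ε, h1, hε1, hεlt1, hε0⟩ := (hev1.and (hev2.and (hev3.and hev0))).exists
  set y₁ : ℝ := (1-ε)/c with hy₁def
  set y₂ : ℝ := (1+ε)/c with hy₂def
  have hy₁ : 0 < y₁ := div_pos (by linarith) hc
  have hy₂ : 0 < y₂ := div_pos (by linarith) hc
  have hA1 := ratio_lemma α q L hLpos hL T hT y₁ hy₁
  have hA2 := ratio_lemma α q L hLpos hL T hT y₂ hy₂
  have E1 : ∀ᶠ x in atTop, T (x * y₁) / (x ^ (-α) * L x) < q * c ^ α + δ :=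
    hA1.eventually_lt_const h1
  have E2 : ∀ᶠ x in atTop, q * c ^ α - δ < T (x * y₂) / (x ^ (-α) * L x) :=
    hA2.eventually_const_lt hε1
  filter_upwards [E1, E2, eventually_gt_atTop 0,
    eventually_ge_atTop (c * |m| / ε)] with x hx1 hx2 hx0 hxm
  have hDx : 0 < x ^ (-α) * L x :=
    mul_pos (Real.rpow_pos_of_pos hx0 _) (hLpos x hx0)
  have habs : |m| ≤ x * ε / c := by
    rw [div_le_iff₀ hε0] at hxm
    rw [le_div_iff₀ hc]
    nlinarith
  have hlow : x * y₁ ≤ m + x / c := by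
    have hm : -(x * ε / c) ≤ m := by linarith [neg_abs_le m]
    have key : x * ((1 - ε) / c) = x / c - x * ε / c := by ring
    rw [hy₁def, key]; linarith
  have hhigh : m + x / c ≤ x * y₂ := by
    have hm : m ≤ x * ε / c := le_trans (le_abs_self m) habs
    have key : x * ((1 + ε) / c) = x / c + x * ε / c := by ring
    rw [hy₂def, key]; linarith
  have hT1 : T (m + x / c) ≤ T (x * y₁) := hanti hlow
  have hT2 : T (x * y₂) ≤ T (m + x / c) := hanti hhigh
  have hd1 : T (m + x / c) / (x ^ (-α) * L x) ≤ T (x * y₁) / (x ^ (-α) * L x) := by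
    gcongr
  have hd2 : T (x * y₂) / (x ^ (-α) * L x) ≤ T (m + x / c) / (x ^ (-α) * L x) := by
    gcongr
  rw [Real.dist_eq, abs_lt]
  constructor <;> linarith

/-- If `X` has mean `μ`, regularly varying balanced tails
`P[X > x] = p x^{-α} L(x)`, `P[X < -x] = (1-p) x^{-α} L(x)` with `α ∈ (1,2)`,
`p ∈ [0,1]`, `L` slowly varying, `P[X = μ] = 0`, and
`ξ = |X - μ|(1 + b·sign(X - μ))` with `b = P[X < μ] - P[X > μ]`, then
`P[ξ > x] = ((1+b)^α p + (1-b)^α (1-p) + o(1)) x^{-α} L(x)` as `x → ∞`, i.e.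
`P[ξ > x] / (x^{-α} L(x)) → (1+b)^α p + (1-b)^α (1-p)`. -/
theorem stmt_10 {Ω : Type*} [MeasurableSpace Ω] (P : Measure Ω) [IsProbabilityMeasure P]
    (X : Ω → ℝ) (hX : Integrable X P) (μ : ℝ) (hμ : μ = ∫ ω, X ω ∂P)
    (α : ℝ) (hα : 1 < α ∧ α < 2) (p : ℝ) (hp : 0 ≤ p ∧ p ≤ 1)
    (L : ℝ → ℝ) (hLpos : ∀ x > 0, 0 < L x)
    (hL : ∀ y > 0, Tendsto (fun x => L (x * y) / L x) atTop (nhds 1))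
    (htailp : ∀ x > 0, (P {ω | X ω > x}).toReal = p * x ^ (-α) * L x)
    (htailm : ∀ x > 0, (P {ω | X ω < -x}).toReal = (1 - p) * x ^ (-α) * L x)
    (h0 : P {ω | X ω = μ} = 0)
    (b : ℝ) (hb : b = (P {ω | X ω < μ}).toReal - (P {ω | X ω > μ}).toReal)
    (ξ : Ω → ℝ) (hξ : ∀ ω, ξ ω = |X ω - μ| * (1 + b * Real.sign (X ω - μ))) :
    Tendsto (fun x => (P {ω | ξ ω > x}).toReal / (x ^ (-α) * L x)) atTop
      (nhds ((1 + b) ^ α * p + (1 - b) ^ α * (1 - p))) := by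
  obtain ⟨hα1, hα2⟩ := hα
  have hα0 : 0 < α := by linarith
  have hXm : AEMeasurable X P := hX.aemeasurable
  set Tp : ℝ → ℝ := fun t => (P {ω | X ω > t}).toReal with hTpdef
  set Tm : ℝ → ℝ := fun t => (P {ω | X ω < -t}).toReal with hTmdef
  have hantip : Antitone Tp := by
    intro s t hst
    exact ENNReal.toReal_mono (measure_ne_top P _)
      (measure_mono (fun ω hω => lt_of_le_of_lt hst hω))
  have hantim : Antitone Tm := by
    intro s t hst
    exact ENNReal.toReal_mono (measure_ne_top P _)
      (measure_mono (fun ω hω => lt_of_lt_of_le hω (neg_le_neg hst)))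
  have aux1 : ∀ s : Set Ω, (P s).toReal ≤ 1 := fun s => by
    simpa using ENNReal.toReal_mono ENNReal.one_ne_top (prob_le_one (μ := P) (s := s))
  have aux0 : ∀ s : Set Ω, 0 ≤ (P s).toReal := fun s => ENNReal.toReal_nonneg
  have hcp : 0 ≤ 1 + b := by
    have h1 := aux1 {ω | X ω > μ}
    have h2 := aux0 {ω | X ω < μ}
    rw [hb]; linarith
  have hcm : 0 ≤ 1 - b := by
    have h1 := aux1 {ω | X ω < μ}
    have h2 := aux0 {ω | X ω > μ}
    rw [hb]; linarith
  set Sp : ℝ → Set ℝ := fun x => {y | μ < y ∧ x < (1 + b) * (y - μ)} with hSpdef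
  set Sm : ℝ → Set ℝ := fun x => {y | y < μ ∧ x < (1 - b) * (μ - y)} with hSmdef
  have hmm2 : ∀ x : ℝ, MeasurableSet (Sm x) := by
    intro x
    have : Sm x = Set.Iio μ ∩ (fun y => (1 - b) * (μ - y)) ⁻¹' Set.Ioi x := rfl
    rw [this]
    exact measurableSet_Iio.inter
      ((measurable_const.mul (measurable_const.sub measurable_id)) measurableSet_Ioi)
  have hdecomp : ∀ x > 0, {ω | ξ ω > x} = X ⁻¹' (Sp x) ∪ X ⁻¹' (Sm x) := by
    intro x hx
    ext ω
    simp only [hSpdef, hSmdef, Set.mem_setOf_eq, Set.mem_union, Set.mem_preimage]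
    rw [hξ ω]
    rcases lt_trichotomy (X ω) μ with h | h | h
    · rw [Real.sign_of_neg (by linarith : X ω - μ < 0),
        abs_of_neg (by linarith : X ω - μ < 0)]
      constructor
      · intro hgt; right; exact ⟨h, by nlinarith⟩
      · rintro (⟨h', _⟩ | ⟨_, h'⟩)
        · linarith
        · nlinarith
    · rw [h]
      simp only [sub_self, abs_zero, Real.sign_zero, zero_mul, gt_iff_lt, lt_irrefl]
      constructor
      · intro h'; linarith
      · rintro (⟨h', _⟩ | ⟨h', _⟩) <;> linarith
    · rw [Real.sign_of_pos (by linarith : 0 < X ω - μ),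
        abs_of_pos (by linarith : 0 < X ω - μ)]
      constructor
      · intro hgt; left; exact ⟨h, by nlinarith⟩
      · rintro (⟨_, h'⟩ | ⟨h', _⟩)
        · nlinarith
        · linarith
  have hPdecomp : ∀ x > 0, (P {ω | ξ ω > x}).toReal
      = (P (X ⁻¹' (Sp x))).toReal + (P (X ⁻¹' (Sm x))).toReal := by
    intro x hx
    rw [hdecomp x hx, measure_union₀ (hXm.nullMeasurable (hmm2 x)) ?_,
      ENNReal.toReal_add (measure_ne_top P _) (measure_ne_top P _)]
    refine Disjoint.aedisjoint ?_
    rw [Set.disjoint_left]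
    rintro ω ⟨h1, _⟩ ⟨h2, _⟩
    exact absurd (lt_trans h1 h2) (lt_irrefl _)
  have limA : Tendsto (fun x => (P (X ⁻¹' (Sp x))).toReal / (x ^ (-α) * L x)) atTop
      (nhds ((1 + b) ^ α * p)) := by
    rcases hcp.eq_or_lt with h | h
    · have hz : ((1:ℝ) + b) ^ α * p = 0 := by
        rw [← h, Real.zero_rpow hα0.ne', zero_mul]
      rw [hz]
      refine tendsto_const_nhds.congr' ?_
      filter_upwards [eventually_gt_atTop 0] with x hx
      have hempty : X ⁻¹' (Sp x) = ∅ := by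
        ext ω
        simp only [hSpdef, Set.mem_preimage, Set.mem_setOf_eq, Set.mem_empty_iff_false,
          iff_false, not_and]
        intro _
        rw [← h, zero_mul]
        linarith
      rw [hempty]
      simp
    · have key := shift_lemma α p L hLpos hL Tp hantip (fun t ht => htailp t ht) (1 + b) μ h
      rw [mul_comm] at key
      refine key.congr' ?_
      filter_upwards [eventually_gt_atTop 0] with x hx
      congr 1
      have hseteq : {ω | X ω > μ + x / (1 + b)} = X ⁻¹' (Sp x) := by
        ext ω
        simp only [hSpdef, Set.mem_preimage, Set.mem_setOf_eq, gt_iff_lt]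
        constructor
        · intro h1
          have hd : 0 < x / (1 + b) := div_pos hx h
          refine ⟨by linarith, ?_⟩
          have h2 : x / (1 + b) < X ω - μ := by linarith
          have := (div_lt_iff₀ h).mp h2
          nlinarith
        · rintro ⟨h1, h2⟩
          have h3 : x / (1 + b) < X ω - μ := by
            rw [div_lt_iff₀ h]; nlinarith
          linarith
      rw [hTpdef]
      simp only []
      rw [hseteq]
  have limB : Tendsto (fun x => (P (X ⁻¹' (Sm x))).toReal / (x ^ (-α) * L x)) atTop
      (nhds ((1 - b) ^ α * (1 - p))) := by
    rcases hcm.eq_or_lt with h | h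
    · have hz : ((1:ℝ) - b) ^ α * (1 - p) = 0 := by
        rw [← h, Real.zero_rpow hα0.ne', zero_mul]
      rw [hz]
      refine tendsto_const_nhds.congr' ?_
      filter_upwards [eventually_gt_atTop 0] with x hx
      have hempty : X ⁻¹' (Sm x) = ∅ := by
        ext ω
        simp only [hSmdef, Set.mem_preimage, Set.mem_setOf_eq, Set.mem_empty_iff_false,
          iff_false, not_and]
        intro _
        rw [← h, zero_mul]
        linarith
      rw [hempty]
      simp
    · have key := shift_lemma α (1 - p) L hLpos hL Tm hantim
        (fun t ht => htailm t ht) (1 - b) (-μ) h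
      rw [mul_comm] at key
      refine key.congr' ?_
      filter_upwards [eventually_gt_atTop 0] with x hx
      congr 1
      have hseteq : {ω | X ω < -(-μ + x / (1 - b))} = X ⁻¹' (Sm x) := by
        ext ω
        simp only [hSmdef, Set.mem_preimage, Set.mem_setOf_eq]
        constructor
        · intro h1
          have hd : 0 < x / (1 - b) := div_pos hx h
          have h1' : X ω < μ - x / (1 - b) := by linarith
          refine ⟨by linarith, ?_⟩
          have h2 : x / (1 - b) < μ - X ω := by linarith
          have := (div_lt_iff₀ h).mp h2
          nlinarith
        · rintro ⟨h1, h2⟩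
          have h3 : x / (1 - b) < μ - X ω := by
            rw [div_lt_iff₀ h]; nlinarith
          linarith
      rw [hTmdef]
      simp only []
      rw [hseteq]
  refine (limA.add limB).congr' ?_
  filter_upwards [eventually_gt_atTop 0] with x hx
  rw [hPdecomp x hx, add_div]
end
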